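/- Let R be a commutative ring, T a 1-tilting R-module with tilting class T^⊥ = Gen(T), and J an ideal such that M = JM for every M ∈ Gen(T). Then there exists a finitely generated ideal I ⊆ J with M = IM for every M ∈ Gen(T). -/

import Mathlib

universe u

/-- `ExtVanishes R T N` encodes `Ext¹_R(T, N) = 0`: every short exact sequence
`0 → N → E → T → 0` splits, i.e. every surjection onto `T` with kernel
isomorphic to `N` admits a section. -/
def ExtVanishes (R : Type u) [Ring R] (T : Type u) [AddCommGroup T]
    [Module R T] (N : Type u) [AddCommGroup N] [Module R N] : Prop :=
  ∀ (E : Type u) [AddCommGroup E] [Module R E] (π : E →ₗ[R] T),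
    Function.Surjective π → Nonempty (↥(LinearMap.ker π) ≃ₗ[R] N) →
    ∃ σ : T →ₗ[R] E, π ∘ₗ σ = LinearMap.id

/-- `MemGen R T M` : `M ∈ Gen(T)`, i.e. `M` is a homomorphic image of a direct
sum of copies of `T`. -/
def MemGen (R : Type u) [Ring R] (T : Type u) [AddCommGroup T] [Module R T]
    (M : Type u) [AddCommGroup M] [Module R M] : Prop :=
  ∃ (X : Type u) (φ : (X →₀ T) →ₗ[R] M), Function.Surjective φ

/-- `MemAdd R T M` : `M ∈ Add(T)`, i.e. `M` is a direct summand of a direct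
sum of copies of `T` (witnessed by a split surjection). -/
def MemAdd (R : Type u) [Ring R] (T : Type u) [AddCommGroup T] [Module R T]
    (M : Type u) [AddCommGroup M] [Module R M] : Prop :=
  ∃ (X : Type u) (p : (X →₀ T) →ₗ[R] M) (s : M →ₗ[R] (X →₀ T)),
    p ∘ₗ s = LinearMap.id

/-- `ProjDimLE1 R M` : `M` has projective dimension at most `1`, i.e. `M` is a
quotient of a free module by a projective submodule. -/
def ProjDimLE1 (R : Type u) [Ring R] (M : Type u) [AddCommGroup M]
    [Module R M] : Prop :=
  ∃ (κ : Type u) (K : Submodule R (κ →₀ R)),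
    Module.Projective R ↥K ∧ Nonempty (((κ →₀ R) ⧸ K) ≃ₗ[R] M)

/-- `IsOneTilting R T` : `T` is a 1-tilting module: `pd T ≤ 1`,
`Ext¹_R(T, T^{(X)}) = 0` for every set `X`, and there is an exact sequence
`0 → R → T₀ → T₁ → 0` with `T₀, T₁ ∈ Add(T)` (here `T₀` is realized as a
direct summand of a direct sum of copies of `T`). -/
def IsOneTilting (R : Type u) [Ring R] (T : Type u) [AddCommGroup T]
    [Module R T] : Prop :=
  ProjDimLE1 R T ∧
  (∀ X : Type u, ExtVanishes R T (X →₀ T)) ∧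
  ∃ (X : Type u) (T0 C : Submodule R (X →₀ T)), IsCompl T0 C ∧
    ∃ f : R →ₗ[R] ↥T0, Function.Injective f ∧
      MemAdd R T (↥T0 ⧸ LinearMap.range f)

/-
Since `T^⊥ = Gen(T)` and `Ext¹(T, -)` commutes with products, the power `T^T` lies in `Gen(T)`,
so `J T^T = T^T`. The diagonal element `(t)_{t ∈ T}` of `T^T` is then a finite sum of products
`r • n` with `r ∈ J`; the ideal `I` generated by these finitely many `r` already has the diagonal in
`I T^T`, and projecting onto the coordinates gives `I T = T`. Divisibility by `I` passes from `T`
to direct sums of copies of `T` and to their quotients, i.e. to all of `Gen(T)`.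

Membership of `T^⊥` in `Gen(T)` uses `0 → R → T₀ → T₁ → 0`: when `Ext¹(T₁, N) = 0`, every
`R → N` extends to `T₀`, so `N` is covered by maps out of `T₀`.
-/

open LinearMap Submodule Function

def ExtendsAlong {R A B : Type*} [Semiring R] [AddCommMonoid A] [Module R A]
    [AddCommMonoid B] [Module R B] (f : A →ₗ[R] B) (N : Type*) [AddCommMonoid N]
    [Module R N] : Prop :=
  ∀ g : A →ₗ[R] N, ∃ h : B →ₗ[R] N, h ∘ₗ f = g

theorem ExtendsAlong.pi {R A B : Type*} [Semiring R] [AddCommMonoid A] [Module R A]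
    [AddCommMonoid B] [Module R B] {f : A →ₗ[R] B} {ι : Type*} {N : ι → Type*}
    [∀ i, AddCommMonoid (N i)] [∀ i, Module R (N i)] (h : ∀ i, ExtendsAlong f (N i)) :
    ExtendsAlong f (∀ i, N i) := by
  intro g
  choose G hG using fun i => h i (proj i ∘ₗ g)
  exact ⟨LinearMap.pi G, LinearMap.ext fun a => funext fun i => LinearMap.congr_fun (hG i) a⟩

section ExtVanishes

variable {R : Type u} [Ring R] {M N E : Type u} [AddCommGroup M] [Module R M]
  [AddCommGroup N] [Module R N] [AddCommGroup E] [Module R E]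

theorem extVanishes_iff_exists_section : ExtVanishes R M N ↔
    ∀ (E : Type u) [AddCommGroup E] [Module R E] (i : N →ₗ[R] E) (π : E →ₗ[R] M),
      Injective i → Exact i π → Surjective π → ∃ σ : M →ₗ[R] E, π ∘ₗ σ = LinearMap.id := by
  constructor
  · intro h E _ _ i π hi hex hπ
    exact h E π hπ ⟨(LinearEquiv.ofEq _ _ (LinearMap.exact_iff.mp hex)).trans
      (LinearEquiv.ofInjective i hi).symm⟩
  · rintro h E _ _ π hπ ⟨ι⟩
    refine h E ((ker π).subtype ∘ₗ ι.symm.toLinearMap) π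
      ((ker π).injective_subtype.comp ι.symm.injective) ?_ hπ
    rw [LinearMap.exact_iff, range_comp, LinearEquiv.range, Submodule.map_top, range_subtype]

theorem ExtVanishes.exists_section (h : ExtVanishes R M N) {i : N →ₗ[R] E} {π : E →ₗ[R] M}
    (hi : Injective i) (hex : Exact i π) (hπ : Surjective π) :
    ∃ σ : M →ₗ[R] E, π ∘ₗ σ = LinearMap.id :=
  extVanishes_iff_exists_section.mp h E i π hi hex hπ

theorem ExtVanishes.exists_retraction (h : ExtVanishes R M N) {i : N →ₗ[R] E}
    {π : E →ₗ[R] M} (hi : Injective i) (hex : Exact i π) (hπ : Surjective π) :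
    ∃ r : E →ₗ[R] N, r ∘ₗ i = LinearMap.id :=
  ((hex.split_tfae hi hπ).out 0 1).mp (h.exists_section hi hex hπ)

theorem ExtVanishes.congr_right {N' : Type u} [AddCommGroup N'] [Module R N']
    (h : ExtVanishes R M N) (e : N ≃ₗ[R] N') : ExtVanishes R M N' :=
  fun E _ _ π hπ hker => h E π hπ (hker.map fun ι => ι.trans e.symm)

/-- The pullback of `0 → N → E → M → 0` along `u : M' → M` splits, and its splitting lifts `u`. -/
theorem ExtVanishes.exists_lift {M' : Type u} [AddCommGroup M'] [Module R M']
    (h : ExtVanishes R M' N) {i : N →ₗ[R] E} {π : E →ₗ[R] M} (hi : Injective i)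
    (hex : Exact i π) (hπ : Surjective π) (u : M' →ₗ[R] M) :
    ∃ σ : M' →ₗ[R] E, π ∘ₗ σ = u := by
  let P := ker (π ∘ₗ fst R E M' - u ∘ₗ snd R E M')
  have mem_P : ∀ z : E × M', z ∈ P ↔ π z.1 = u z.2 := fun z => by simp [P, sub_eq_zero]
  let i' : N →ₗ[R] P := codRestrict P (inl R E M' ∘ₗ i) fun n =>
    (mem_P _).2 (by simpa using hex.apply_apply_eq_zero n)
  let q : P →ₗ[R] M' := snd R E M' ∘ₗ P.subtype
  have hi' : Injective i' := fun n n' hn => hi (congrArg (fun z : P => z.1.1) hn)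
  have hq : Surjective q := fun m => by
    obtain ⟨e, he⟩ := hπ (u m)
    exact ⟨⟨(e, m), (mem_P _).2 he⟩, rfl⟩
  have hex' : Exact i' q := by
    rintro ⟨⟨e, m⟩, hz⟩
    constructor
    · rintro (rfl : m = 0)
      obtain ⟨n, rfl⟩ := (hex e).1 (by simpa using (mem_P _).1 hz)
      exact ⟨n, rfl⟩
    · rintro ⟨n, hn⟩
      rw [← hn]
      rfl
  obtain ⟨s, hs⟩ := h.exists_section hi' hex' hq
  refine ⟨fst R E M' ∘ₗ P.subtype ∘ₗ s, LinearMap.ext fun m => ?_⟩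
  have hsm : (s m).1.2 = m := LinearMap.congr_fun hs m
  simpa [hsm] using (mem_P _).1 (s m).2

theorem ExtVanishes.finsupp (X : Type u) (h : ExtVanishes R M N) :
    ExtVanishes R (X →₀ M) N := by
  refine extVanishes_iff_exists_section.mpr fun E _ _ i π hi hex hπ => ?_
  choose σ hσ using fun x => h.exists_lift hi hex hπ (Finsupp.lsingle x)
  exact ⟨Finsupp.lsum ℕ σ, Finsupp.lhom_ext' fun x => by
    rw [LinearMap.comp_assoc, Finsupp.lsum_comp_lsingle, hσ, LinearMap.id_comp]⟩

theorem ExtVanishes.of_memAdd {T : Type u} [AddCommGroup T] [Module R T]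
    (h : ExtVanishes R T N) (hM : MemAdd R T M) : ExtVanishes R M N := by
  obtain ⟨X, p, s, hps⟩ := hM
  refine extVanishes_iff_exists_section.mpr fun E _ _ i π hi hex hπ => ?_
  obtain ⟨σ, hσ⟩ := (h.finsupp X).exists_lift hi hex hπ p
  exact ⟨σ ∘ₗ s, by rw [← LinearMap.comp_assoc, hσ, hps]⟩

/-- The pushout of `0 → A → B → Q → 0` along `g : A → N` splits, and its retraction extends `g`. -/
theorem ExtVanishes.extendsAlong {A B Q : Type u} [AddCommGroup A] [Module R A]
    [AddCommGroup B] [Module R B] [AddCommGroup Q] [Module R Q] (h : ExtVanishes R Q N)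
    {f : A →ₗ[R] B} {p : B →ₗ[R] Q} (hf : Injective f) (hex : Exact f p) (hp : Surjective p) :
    ExtendsAlong f N := by
  intro g
  let W := range (f.prod (-g))
  let ν : N →ₗ[R] (B × N) ⧸ W := W.mkQ ∘ₗ inr R B N
  let π : (B × N) ⧸ W →ₗ[R] Q := W.liftQ (p ∘ₗ fst R B N) (by
    rintro _ ⟨a, rfl⟩
    exact hex.apply_apply_eq_zero a)
  have hmk : ∀ a, W.mkQ (f a, 0) = ν (g a) := fun a =>
    (Submodule.Quotient.eq W).2 ⟨a, by simp⟩
  have hν : Injective ν := by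
    intro n n' hn
    obtain ⟨a, ha⟩ := (Submodule.Quotient.eq W).1 hn
    have ha0 : a = 0 := hf (by simpa using congrArg Prod.fst ha)
    simpa [ha0, sub_eq_zero] using (congrArg Prod.snd ha).symm
  have hπ : Surjective π := fun q => by
    obtain ⟨b, rfl⟩ := hp q
    exact ⟨W.mkQ (b, 0), rfl⟩
  have hex' : Exact ν π := by
    intro z
    obtain ⟨⟨b, n⟩, rfl⟩ := W.mkQ_surjective z
    constructor
    · intro (hb : p b = 0)
      obtain ⟨a, rfl⟩ := (hex b).1 hb
      refine ⟨n + g a, ?_⟩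
      rw [map_add, ← hmk, show ν n = W.mkQ (0, n) from rfl, ← map_add, Prod.mk_add_mk,
        add_zero, zero_add]
    · rintro ⟨n', hn'⟩
      rw [← hn']
      simp [π, ν]
  obtain ⟨r, hr⟩ := h.exists_retraction hν hex' hπ
  refine ⟨r ∘ₗ W.mkQ ∘ₗ inl R B N, LinearMap.ext fun a => ?_⟩
  show r (W.mkQ (f a, 0)) = g a
  rw [hmk]
  exact LinearMap.congr_fun hr (g a)

theorem extVanishes_iff_extendsAlong {P : Type u} [AddCommGroup P] [Module R P]
    [Module.Projective R P] {K : Submodule R P} (e : (P ⧸ K) ≃ₗ[R] M) :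
    ExtVanishes R M N ↔ ExtendsAlong K.subtype N := by
  refine ⟨fun h => h.extendsAlong K.injective_subtype
    (LinearEquiv.postcomp_exact_iff_exact.mpr (LinearMap.exact_subtype_mkQ K))
    (e.surjective.comp K.mkQ_surjective), fun h => ?_⟩
  refine extVanishes_iff_exists_section.mpr fun E _ _ i π hi hex hπ => ?_
  obtain ⟨ℓ, hℓ⟩ := Module.projective_lifting_property π (e.toLinearMap ∘ₗ K.mkQ) hπ
  have hℓK : ∀ k : K, ℓ k ∈ range i := fun k => (hex _).1 <| by
    rw [← LinearMap.comp_apply, hℓ]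
    simp
  obtain ⟨G, hG⟩ := h ((LinearEquiv.ofInjective i hi).symm.toLinearMap ∘ₗ
    codRestrict _ (ℓ ∘ₗ K.subtype) hℓK)
  have hiG : ∀ k : K, i (G k) = ℓ k := fun k => by
    have hk : G k = (LinearEquiv.ofInjective i hi).symm ⟨ℓ k, hℓK k⟩ := LinearMap.congr_fun hG k
    rw [hk]
    exact congrArg Subtype.val ((LinearEquiv.ofInjective i hi).apply_symm_apply _)
  let δ := ℓ - i ∘ₗ G
  have hKδ : K ≤ ker δ := fun x hx => by
    simpa [δ, sub_eq_zero] using (hiG ⟨x, hx⟩).symm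
  refine ⟨K.liftQ δ hKδ ∘ₗ e.symm.toLinearMap, LinearMap.ext fun t => ?_⟩
  obtain ⟨x, hx⟩ := K.mkQ_surjective (e.symm t)
  have hπℓ : π (ℓ x) = t := by
    rw [← LinearMap.comp_apply, hℓ, LinearMap.comp_apply, hx]
    exact e.apply_symm_apply t
  simp [← hx, δ, hex.apply_apply_eq_zero, hπℓ]

theorem ExtVanishes.pi {ι : Type u} {N : ι → Type u} [∀ i, AddCommGroup (N i)]
    [∀ i, Module R (N i)] (h : ∀ i, ExtVanishes R M (N i)) : ExtVanishes R M (∀ i, N i) :=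
  let e := (Finsupp.linearCombination R id).quotKerEquivOfSurjective
    (Finsupp.linearCombination_id_surjective R M)
  (extVanishes_iff_extendsAlong e).mpr
    (ExtendsAlong.pi fun i => (extVanishes_iff_extendsAlong e).mp (h i))

end ExtVanishes

section Gen

variable {R : Type u} [Ring R] {T N : Type u} [AddCommGroup T] [Module R T]
  [AddCommGroup N] [Module R N]

theorem memGen_of_forall_mem_range {X : Type u}
    (h : ∀ n : N, ∃ g : (X →₀ T) →ₗ[R] N, n ∈ range g) : MemGen R T N := by
  choose g hg using h
  let φ : ((N × X) →₀ T) →ₗ[R] N := Finsupp.lsum ℕ fun q => g q.1 ∘ₗ Finsupp.lsingle q.2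
  have hφ : ∀ n, φ ∘ₗ Finsupp.lmapDomain T R (Prod.mk n) = g n := fun n =>
    Finsupp.lhom_ext' fun x => LinearMap.ext fun t => by simp [φ]
  refine ⟨N × X, φ, fun n => ?_⟩
  obtain ⟨v, hv⟩ := hg n
  exact ⟨Finsupp.lmapDomain T R (Prod.mk n) v, by rw [← LinearMap.comp_apply, hφ, hv]⟩

theorem IsOneTilting.memGen_of_extVanishes (hT : IsOneTilting R T) (hN : ExtVanishes R T N) :
    MemGen R T N := by
  obtain ⟨-, -, X, T₀, C, hT₀C, f, hf, hT₁⟩ := hT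
  have hext : ExtendsAlong f N := (hN.of_memAdd hT₁).extendsAlong hf
    (LinearMap.exact_map_mkQ_range f) (mkQ_surjective _)
  refine memGen_of_forall_mem_range (X := X) fun n => ?_
  obtain ⟨g, hg⟩ := hext (toSpanSingleton R N n)
  refine ⟨g ∘ₗ T₀.projectionOnto C hT₀C, f 1, ?_⟩
  simpa [projectionOnto_apply_left] using LinearMap.congr_fun hg 1

theorem IsOneTilting.memGen_pi (hT : IsOneTilting R T) (ι : Type u) : MemGen R T (ι → T) :=
  hT.memGen_of_extVanishes <| ExtVanishes.pi fun _ =>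
    (hT.2.1 PUnit).congr_right (Finsupp.uniqueLinearEquiv R T PUnit.unit)

theorem MemGen.smul_top_eq_top {M : Type u} [AddCommGroup M] [Module R M] {I : Ideal R}
    (hM : MemGen R T M) (hT : I • (⊤ : Submodule R T) = ⊤) : I • (⊤ : Submodule R M) = ⊤ := by
  obtain ⟨X, φ, hφ⟩ := hM
  have hM : ⊤ = ⨆ x, map (φ ∘ₗ Finsupp.lsingle x) (I • ⊤) := by
    simp_rw [hT, map_comp, ← Submodule.map_iSup, Submodule.map_top, Finsupp.iSup_lsingle_range,
      Submodule.map_top,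
      range_eq_top.mpr hφ]
  refine eq_top_iff.mpr (hM.trans_le (iSup_le fun x => ?_))
  rw [map_smul'']
  exact smul_mono le_rfl le_top

end Gen

theorem Submodule.exists_fg_le_of_mem_smul {R M : Type*} [Semiring R] [AddCommMonoid M]
    [Module R M] {J : Ideal R} {N : Submodule R M} {x : M} (hx : x ∈ J • N) :
    ∃ I : Ideal R, I.FG ∧ I ≤ J ∧ x ∈ I • N := by
  refine smul_induction_on hx (fun r hr n hn => ?_) fun x y hx hy => ?_
  · exact ⟨Ideal.span {r}, fg_span_singleton r, (Ideal.span_singleton_le_iff_mem J).2 hr,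
      smul_mem_smul (Ideal.subset_span rfl) hn⟩
  · obtain ⟨I₁, hI₁, hI₁J, hx⟩ := hx
    obtain ⟨I₂, hI₂, hI₂J, hy⟩ := hy
    exact ⟨I₁ ⊔ I₂, Submodule.FG.sup hI₁ hI₂, sup_le hI₁J hI₂J,
      add_mem (smul_mono_left le_sup_left hx) (smul_mono_left le_sup_right hy)⟩

theorem smul_top_eq_top_of_id_mem_smul {R M : Type*} [Semiring R] [AddCommMonoid M]
    [Module R M] {I : Ideal R} (h : (id : M → M) ∈ I • (⊤ : Submodule R (M → M))) :
    I • (⊤ : Submodule R M) = ⊤ := by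
  refine eq_top_iff.mpr fun m _ => ?_
  have hm := mem_map_of_mem (f := LinearMap.proj (R := R) m) h
  rw [map_smul''] at hm
  exact smul_mono le_rfl le_top hm

/-- Let `R` be a commutative ring, `T` a 1-tilting module (so
that the tilting class `T^⊥` equals `Gen(T)`), and `J` an ideal with `M = JM`
for every `M ∈ Gen(T)`.  Then there is a finitely generated ideal `I ⊆ J`
with `M = IM` for every `M ∈ Gen(T)`. -/
theorem exists_fg_subideal_divisibility (R : Type u) [CommRing R]
    (T : Type u) [AddCommGroup T] [Module R T]
    (hT : IsOneTilting R T) (J : Ideal R)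
    (hJ : ∀ (M : Type u) [AddCommGroup M] [Module R M],
      MemGen R T M → J • (⊤ : Submodule R M) = ⊤) :
    ∃ I : Ideal R, I.FG ∧ I ≤ J ∧
      ∀ (M : Type u) [AddCommGroup M] [Module R M],
        MemGen R T M → I • (⊤ : Submodule R M) = ⊤ := by
  have hid : (id : T → T) ∈ J • (⊤ : Submodule R (T → T)) := by
    rw [hJ _ (hT.memGen_pi T)]
    trivial
  obtain ⟨I, hIfg, hIJ, hI⟩ := exists_fg_le_of_mem_smul hid
  exact ⟨I, hIfg, hIJ, fun M _ _ hM => hM.smul_top_eq_top (smul_top_eq_top_of_id_mem_smul hI)⟩
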